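/- Consider the drawdown-modulated feedback controller I(k) = γ·M(k)·V(k) with a constant gain γ satisfying −1/X_max ≤ γ ≤ 1/|X_min|, where M(k) = (d_max − d(k))/(1 − d(k)). If every realized return satisfies X_min ≤ X(k) ≤ X_max, then for all stages k = 0, 1, …, N: the account value obeys V(k+1) = (1 + γ·M(k)·X(k))·V(k), the drawdown satisfies d(k) ≤ d_max, and V(k) > 0. -/

import Mathlib

/-!
Since `1 - d(k) = V(k) / V_max(k)`, the modulator satisfies the identity
`(1 - M(k)) V(k) = (1 - d_max) V_max(k)`. The gain bounds give `γ X(k) ≥ -1`, so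
`V(k+1) = (1 + γ M(k) X(k)) V(k) ≥ (1 - M(k)) V(k) = (1 - d_max) V_max(k)`. Hence the
invariant `0 < V(k)`, `(1 - d_max) V_max(k) ≤ V(k)` (equivalently `d(k) ≤ d_max`) propagates
from stage `k` to stage `k + 1`.
-/

/-- Running maximum `V_max(k) = max_{0 ≤ i ≤ k} V(i)` of the account value. -/
noncomputable def runMax (V : ℕ → ℝ) (k : ℕ) : ℝ :=
  (Finset.range (k + 1)).sup' Finset.nonempty_range_add_one V

/-- Percentage drawdown `d(k) = (V_max(k) - V(k)) / V_max(k)`. -/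
noncomputable def drawdown (V : ℕ → ℝ) (k : ℕ) : ℝ :=
  (runMax V k - V k) / runMax V k

noncomputable def modulator (dmax d : ℝ) : ℝ :=
  (dmax - d) / (1 - d)

lemma modulator_nonneg {dmax d : ℝ} (hd : d ≤ dmax) (hd1 : d < 1) : 0 ≤ modulator dmax d :=
  div_nonneg (sub_nonneg.2 hd) (sub_pos.2 hd1).le

lemma neg_one_le_mul_of_le_of_le {γ x a b : ℝ} (hγlo : -(1 / b) ≤ γ) (hγhi : γ ≤ 1 / |a|)
    (hax : a ≤ x) (hxb : x ≤ b) : -1 ≤ γ * x := by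
  rcases lt_trichotomy x 0 with hx | rfl | hx
  · have ha : 0 < |a| := by linarith [neg_abs_le a]
    calc -1 ≤ 1 / |a| * x := by
          rw [one_div_mul_eq_div, le_div_iff₀ ha]; linarith [neg_abs_le a]
      _ ≤ γ * x := mul_le_mul_of_nonpos_right hγhi hx.le
  · simp
  · have hb : 0 < b := hx.trans_le hxb
    calc -1 ≤ -(1 / b) * x := by
          rw [neg_mul, one_div_mul_eq_div, neg_le_neg_iff, div_le_one hb]; exact hxb
      _ ≤ γ * x := mul_le_mul_of_nonneg_right hγlo hx.le

section runMax

variable {V : ℕ → ℝ}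

lemma le_runMax (V : ℕ → ℝ) (k : ℕ) : V k ≤ runMax V k :=
  Finset.le_sup' V (Finset.self_mem_range_succ k)

lemma runMax_zero (V : ℕ → ℝ) : runMax V 0 = V 0 := by
  simp [runMax]

lemma runMax_succ (V : ℕ → ℝ) (k : ℕ) :
    runMax V (k + 1) = max (V (k + 1)) (runMax V k) := by
  simp [runMax, Finset.range_add_one (n := k + 1), Finset.sup'_insert]

lemma runMax_pos (hV0 : 0 < V 0) (k : ℕ) : 0 < runMax V k :=
  hV0.trans_le (Finset.le_sup' V (Finset.mem_range.2 k.succ_pos))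

lemma drawdown_le_iff {k : ℕ} {dmax : ℝ} (hR : 0 < runMax V k) :
    drawdown V k ≤ dmax ↔ (1 - dmax) * runMax V k ≤ V k := by
  rw [drawdown, div_le_iff₀ hR]
  constructor <;> intro h <;> linarith

lemma drawdown_lt_one {k : ℕ} (hV : 0 < V k) : drawdown V k < 1 := by
  have hR : 0 < runMax V k := hV.trans_le (le_runMax V k)
  rw [drawdown, div_lt_one hR]
  linarith

lemma one_sub_modulator_drawdown_mul {k : ℕ} (dmax : ℝ) (hV : 0 < V k) :
    (1 - modulator dmax (drawdown V k)) * V k = (1 - dmax) * runMax V k := by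
  have hR : 0 < runMax V k := hV.trans_le (le_runMax V k)
  have h1d : 1 - drawdown V k = V k / runMax V k := by
    rw [drawdown]; field_simp; ring
  have h1d_ne : 1 - drawdown V k ≠ 0 := h1d ▸ (div_pos hV hR).ne'
  rw [modulator, one_sub_div h1d_ne, sub_sub_sub_cancel_right, h1d]
  field_simp

end runMax

section feedback

variable {V X : ℕ → ℝ} {dmax γ : ℝ}

theorem pos_and_one_sub_mul_runMax_le (hdmax0 : 0 ≤ dmax) (hdmax1 : dmax < 1) (hV0 : 0 < V 0)
    (hstep : ∀ k, V (k + 1) = (1 + γ * modulator dmax (drawdown V k) * X k) * V k)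
    (hγX : ∀ k, -1 ≤ γ * X k) (k : ℕ) :
    0 < V k ∧ (1 - dmax) * runMax V k ≤ V k := by
  induction k with
  | zero => exact ⟨hV0, by rw [runMax_zero]; exact mul_le_of_le_one_left hV0.le (by linarith)⟩
  | succ k ih =>
    obtain ⟨hV, hfloor⟩ := ih
    have hR : 0 < runMax V k := runMax_pos hV0 k
    set M := modulator dmax (drawdown V k)
    have hM : 0 ≤ M :=
      modulator_nonneg ((drawdown_le_iff hR).2 hfloor) (drawdown_lt_one hV)
    have hnext : (1 - dmax) * runMax V k ≤ V (k + 1) :=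
      calc (1 - dmax) * runMax V k = (1 - M) * V k := (one_sub_modulator_drawdown_mul dmax hV).symm
        _ ≤ (1 + γ * M * X k) * V k := by gcongr; nlinarith [hγX k]
        _ = V (k + 1) := (hstep k).symm
    have hV' : 0 < V (k + 1) := (mul_pos (sub_pos.2 hdmax1) hR).trans_le hnext
    refine ⟨hV', ?_⟩
    rw [runMax_succ, mul_max_of_nonneg _ _ (sub_nonneg.2 hdmax1.le)]
    exact max_le (mul_le_of_le_one_left hV'.le (by linarith)) hnext

end feedback

theorem drawdown_modulated_feedback_control_general
    (N : ℕ) (V I X : ℕ → ℝ) (Xmin Xmax dmax γ : ℝ)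
    (hdmax0 : 0 < dmax) (hdmax1 : dmax < 1)
    (hγlo : -(1 / Xmax) ≤ γ) (hγhi : γ ≤ 1 / |Xmin|)
    (hV0 : 0 < V 0)
    (hrec : ∀ k, V (k + 1) = V k + I k * X k)
    (hctrl : ∀ k, I k = γ * ((dmax - drawdown V k) / (1 - drawdown V k)) * V k)
    (hX : ∀ k, Xmin ≤ X k ∧ X k ≤ Xmax) :
    ∀ k ≤ N,
      V (k + 1) = (1 + γ * ((dmax - drawdown V k) / (1 - drawdown V k)) * X k) * V k ∧
      drawdown V k ≤ dmax ∧ 0 < V k := by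
  have hstep : ∀ k, V (k + 1) = (1 + γ * modulator dmax (drawdown V k) * X k) * V k := by
    intro k
    rw [hrec k, hctrl k, modulator]
    ring
  have hγX : ∀ k, -1 ≤ γ * X k := fun k ↦
    neg_one_le_mul_of_le_of_le hγlo hγhi (hX k).1 (hX k).2
  intro k _
  obtain ⟨hV, hfloor⟩ := pos_and_one_sub_mul_runMax_le hdmax0.le hdmax1 hV0 hstep hγX k
  exact ⟨hstep k, (drawdown_le_iff (runMax_pos hV0 k)).2 hfloor, hV⟩

theorem drawdown_modulated_feedback_control
    (N : ℕ) (V I X : ℕ → ℝ) (Xmin Xmax dmax γ : ℝ)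
    (hXmin1 : -1 < Xmin) (hXmin0 : Xmin < 0) (hXmax : 0 < Xmax)
    (hdmax0 : 0 < dmax) (hdmax1 : dmax < 1)
    (hγlo : -(1 / Xmax) ≤ γ) (hγhi : γ ≤ 1 / |Xmin|)
    (hV0 : 0 < V 0)
    (hrec : ∀ k, V (k + 1) = V k + I k * X k)
    (hctrl : ∀ k, I k = γ * ((dmax - drawdown V k) / (1 - drawdown V k)) * V k)
    (hX : ∀ k, Xmin ≤ X k ∧ X k ≤ Xmax) :
    ∀ k ≤ N,
      V (k + 1) = (1 + γ * ((dmax - drawdown V k) / (1 - drawdown V k)) * X k) * V k ∧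
      drawdown V k ≤ dmax ∧ 0 < V k :=
  drawdown_modulated_feedback_control_general N V I X Xmin Xmax dmax γ hdmax0 hdmax1 hγlo hγhi hV0
    hrec hctrl hX
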